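/- arXiv:math/0410504 — 2 statements merged into one kernel-verified Lean document; each statement's English description precedes it below -/
import Mathlib

section
/- Let T be a Borel automorphism of an uncountable standard Borel space (X, 𝓑) and let F₁, …, Fₙ be Borel subsets of X. Then there exist an aperiodic Borel automorphism S of X and a Borel automorphism Q of X whose support is countable such that (S ∘ Q)(Fᵢ) = T(Fᵢ) for every i = 1, …, n. (The aperiodic automorphisms are dense in the quotient group Aut₀(X, 𝓑) = Aut(X, 𝓑)/Ctbl(X) with respect to the quotient weak topology p₀.) -/
/-!
Let `a x` record which of the sets `Fᵢ` contain `x`, and put `b = a ∘ T⁻¹`; it suffices to find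
`S` and `Q` with `b ∘ S ∘ Q = a`. Choose a countable set `D` that contains every countable fibre
of `a` and of `b` and meets every uncountable one in an infinite set, and a Borel `L : X → ℤ` that
is a bijection from `D` onto `ℤ` and cuts every uncountable fibre into uncountable level sets. By
the Borel isomorphism theorem there is a Borel `S` mapping `D ∩ {L = k}` onto `D ∩ {L = k + 1}`
and `{a = s, L = k} \ D` onto `{b = s, L = k + 1} \ D`. Then `L ∘ S = L + 1`, so `S` is
aperiodic, and `b ∘ S = a` off `D`. On `D` the fibres of `a` and of `b ∘ S` are equinumerous
(both infinite, or equal to the fibres of `a` and `b`), so a permutation `Q` of `D` repairs `S`.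
-/

open MeasureTheory Set

/-- `T` is a Borel automorphism: both `T` and its inverse are measurable. -/
def IsBorelAuto {X : Type*} [MeasurableSpace X] (T : Equiv.Perm X) : Prop :=
  Measurable T ∧ Measurable T.symm

/-- `T` is aperiodic: no point is periodic. -/
def IsAperiodic {X : Type*} (T : Equiv.Perm X) : Prop :=
  ∀ (x : X) (n : ℤ), n ≠ 0 → (T ^ n) x ≠ x

section Measurability

variable {X Y : Type*} [MeasurableSpace X] [MeasurableSpace Y]

lemma Measurable.of_eqOn_compl_countable [MeasurableSingletonClass X] {f g : X → Y}
    {D : Set X} (hD : D.Countable) (hg : Measurable g) (hfg : EqOn f g Dᶜ) : Measurable f := by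
  have := hD.to_subtype
  refine measurable_of_restrict_of_restrict_compl hD.measurableSet (measurable_of_countable _) ?_
  rw [domRestrict_eq_domRestrict_iff.mpr hfg]
  exact hg.comp measurable_subtype_coe

lemma isBorelAuto_of_countable_support [MeasurableSingletonClass X] {Q : Equiv.Perm X}
    (hQ : {x | Q x ≠ x}.Countable) : IsBorelAuto Q := by
  refine ⟨measurable_id.of_eqOn_compl_countable hQ fun x hx => not_not.mp hx,
    measurable_id.of_eqOn_compl_countable hQ fun x hx => ?_⟩
  rw [id, Equiv.symm_apply_eq]
  exact (not_not.mp hx).symm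

lemma measurable_fiberwise {κ : Type*} [Countable κ] {π : X → κ}
    (hπ : ∀ i, MeasurableSet {x | π x = i}) {f : ∀ i, {x // π x = i} → Y}
    (hf : ∀ i, Measurable (f i)) : Measurable fun x => f (π x) ⟨x, rfl⟩ := by
  intro B hB
  have : (fun x => f (π x) ⟨x, rfl⟩) ⁻¹' B = ⋃ i, Subtype.val '' (f i ⁻¹' B) := by
    ext x
    simp only [mem_preimage, mem_iUnion, mem_image]
    constructor
    · exact fun hx => ⟨π x, ⟨x, rfl⟩, hx, rfl⟩
    · rintro ⟨_, ⟨x, rfl⟩, hx, rfl⟩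
      exact hx
  rw [this]
  exact .iUnion fun i => (hπ i).subtype_image (hf i hB)

lemma exists_measurable_eqOn_compl_forall_inter_eq_singleton [MeasurableSingletonClass X]
    {D : Set X} (hD : D.Countable) (hDinf : D.Infinite)
    {L₀ : X → ℤ} (hL₀ : Measurable L₀) :
    ∃ L : X → ℤ, Measurable L ∧ EqOn L L₀ Dᶜ ∧ ∀ k, ∃ x, D ∩ L ⁻¹' {k} = {x} := by
  classical
  have := hD.to_subtype
  have := hDinf.to_subtype
  obtain ⟨ψ⟩ : Nonempty (D ≃ ℤ) := nonempty_equiv_of_countable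
  let L (x : X) : ℤ := if h : x ∈ D then ψ ⟨x, h⟩ else L₀ x
  have hL : EqOn L L₀ Dᶜ := fun x hx => dif_neg hx
  refine ⟨L, hL₀.of_eqOn_compl_countable hD hL, hL, fun k => ⟨ψ.symm k, ?_⟩⟩
  ext x
  by_cases hx : x ∈ D
  · simp [L, hx, ← Equiv.eq_symm_apply, ← Subtype.val_inj]
  · have : x ≠ ψ.symm k := fun h => hx (h ▸ (ψ.symm k).2)
    simp [hx, this]

end Measurability

section StandardBorel

variable {X : Type*} [MeasurableSpace X] [StandardBorelSpace X]

lemma exists_isBorelAuto_comp_eq_of_equiv_fibers {κ : Type*} [Countable κ] {π π' : X → κ}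
    (hπ : ∀ i, MeasurableSet {x | π x = i}) (hπ' : ∀ i, MeasurableSet {x | π' x = i})
    (h : ∀ i, Nonempty ({x // π x = i} ≃ {x // π' x = i})) :
    ∃ S : Equiv.Perm X, IsBorelAuto S ∧ ∀ x, π' (S x) = π x := by
  have e i : {x // π x = i} ≃ᵐ {x // π' x = i} :=
    have : StandardBorelSpace {x // π x = i} := (hπ i).standardBorel
    have : StandardBorelSpace {x // π' x = i} := (hπ' i).standardBorel
    PolishSpace.Equiv.measurableEquiv (h i).some
  refine ⟨Equiv.ofFiberEquiv fun i => (e i).toEquiv, ⟨?_, ?_⟩, Equiv.ofFiberEquiv_map _⟩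
  · exact measurable_fiberwise hπ fun i => measurable_subtype_coe.comp (e i).measurable
  · exact measurable_fiberwise hπ' fun i => measurable_subtype_coe.comp (e i).symm.measurable

lemma nonempty_equiv_of_not_countable {A B : Set X} (hA : MeasurableSet A)
    (hB : MeasurableSet B) (hA' : ¬A.Countable) (hB' : ¬B.Countable) : Nonempty (A ≃ B) :=
  have := hA.standardBorel
  have := hB.standardBorel
  ⟨(PolishSpace.measurableEquivOfNotCountable (mt countable_coe_iff.mp hA')
    (mt countable_coe_iff.mp hB')).toEquiv⟩

lemma exists_measurable_int_forall_preimage_not_countable [Uncountable X] :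
    ∃ ℓ : X → ℤ, Measurable ℓ ∧ ∀ k, ¬(ℓ ⁻¹' {k}).Countable := by
  let e : X ≃ᵐ ℤ × ℝ := PolishSpace.measurableEquivOfNotCountable not_countable not_countable
  refine ⟨Prod.fst ∘ e, measurable_fst.comp e.measurable, fun k hk => not_countable (α := ℝ) ?_⟩
  have hmaps : MapsTo (fun r : ℝ => e.symm (k, r)) univ (Prod.fst ∘ e ⁻¹' {k}) := fun r _ => by
    simp
  exact countable_univ_iff.mp <| hmaps.countable_of_injOn
    (fun r _ r' _ h => congrArg Prod.snd (e.symm.injective h)) hk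

lemma exists_measurable_int_forall_inter_not_countable {κ : Type*} [Countable κ] {π : X → κ}
    (hπ : ∀ i, MeasurableSet {x | π x = i}) :
    ∃ L : X → ℤ, Measurable L ∧
      ∀ U : Set κ, ¬(π ⁻¹' U).Countable → ∀ k, ¬(π ⁻¹' U ∩ L ⁻¹' {k}).Countable := by
  have hfiber i : ∃ ℓ : {x // π x = i} → ℤ, Measurable ℓ ∧
      (¬{x | π x = i}.Countable → ∀ k, ¬(ℓ ⁻¹' {k}).Countable) := by
    have : StandardBorelSpace {x // π x = i} := (hπ i).standardBorel
    by_cases hi : {x | π x = i}.Countable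
    · exact ⟨0, measurable_const, absurd hi⟩
    · have : Uncountable {x // π x = i} := ⟨mt countable_coe_iff.mp hi⟩
      obtain ⟨ℓ, hℓ, hℓk⟩ :=
        exists_measurable_int_forall_preimage_not_countable (X := {x // π x = i})
      exact ⟨ℓ, hℓ, fun _ => hℓk⟩
  choose ℓ hℓ hℓk using hfiber
  refine ⟨fun x => ℓ (π x) ⟨x, rfl⟩, measurable_fiberwise hπ hℓ, fun U hU k hk => ?_⟩
  obtain ⟨i, hiU, hi⟩ : ∃ i ∈ U, ¬{x | π x = i}.Countable := by
    by_contra! h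
    refine hU ((U.to_countable.biUnion h).mono fun x hx => ?_)
    exact mem_biUnion hx rfl
  have hmaps :
      MapsTo Subtype.val (ℓ i ⁻¹' {k}) (π ⁻¹' U ∩ (fun x => ℓ (π x) ⟨x, rfl⟩) ⁻¹' {k}) := by
    rintro ⟨x, rfl⟩ hx
    exact ⟨hiU, hx⟩
  exact hℓk i hi k (hmaps.countable_of_injOn Subtype.val_injective.injOn hk)

end StandardBorel

lemma isAperiodic_of_map_add_one {X : Type*} {S : Equiv.Perm X} (L : X → ℤ)
    (hL : ∀ x, L (S x) = L x + 1) : IsAperiodic S := by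
  have hpow (m : ℤ) : ∀ x, L ((S ^ m) x) = L x + m := by
    induction m using Int.induction_on with
    | zero => simp
    | succ m ih => intro x; rw [zpow_add_one, Equiv.Perm.mul_apply, ih, hL]; ring
    | pred m ih =>
      intro x
      have h := hL (S⁻¹ x)
      rw [← Equiv.Perm.mul_apply, mul_inv_cancel, Equiv.Perm.one_apply] at h
      rw [zpow_sub_one, Equiv.Perm.mul_apply, ih]
      omega
  intro x m hm hx
  have := hpow m x
  rw [hx] at this
  omega

section Captures

variable {X : Type*}

def Captures (D A : Set X) : Prop :=
  (A.Countable → A ⊆ D) ∧ (¬A.Countable → (D ∩ A).Infinite)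

lemma exists_countable_forall_captures {κ : Type*} [Countable κ] (U : κ → Set X) :
    ∃ D : Set X, D.Countable ∧ ∀ i, Captures D (U i) := by
  have h i : ∃ R ⊆ U i, R.Countable ∧ Captures R (U i) := by
    by_cases hU : (U i).Countable
    · exact ⟨U i, subset_rfl, hU, fun _ => subset_rfl, absurd hU⟩
    · obtain ⟨R, hRU, hR, hRinf⟩ :=
        Infinite.exists_subset_countable_infinite fun hfin => hU hfin.countable
      exact ⟨R, hRU, hR, fun h => absurd h hU, fun _ => by rwa [inter_eq_left.mpr hRU]⟩
  choose R hRU hR hcap using h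
  refine ⟨⋃ i, R i, countable_iUnion hR, fun i => ⟨fun hU => ?_, fun hU => ?_⟩⟩
  · exact ((hcap i).1 hU).trans (subset_iUnion R i)
  · exact ((hcap i).2 hU).mono (inter_subset_inter_left _ (subset_iUnion R i))

lemma Captures.nonempty_equiv_inter {D A B : Set X} (hD : D.Countable)
    (hA : Captures D A) (hB : Captures D B) (hAB : Nonempty (A ≃ B)) :
    Nonempty (↥(D ∩ A) ≃ ↥(D ∩ B)) := by
  obtain ⟨e⟩ := hAB
  by_cases hAc : A.Countable
  · have hBc : B.Countable := countable_coe_iff.mp (e.countable_iff.mp hAc.to_subtype)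
    rw [inter_eq_right.mpr (hA.1 hAc), inter_eq_right.mpr (hB.1 hBc)]
    exact ⟨e⟩
  · have hBc : ¬B.Countable := fun hBc =>
      hAc (countable_coe_iff.mp (e.countable_iff.mpr hBc.to_subtype))
    have := (hD.mono (inter_subset_left (t := A))).to_subtype
    have := (hD.mono (inter_subset_left (t := B))).to_subtype
    have := (hA.2 hAc).to_subtype
    have := (hB.2 hBc).to_subtype
    exact nonempty_equiv_of_countable

lemma exists_perm_support_subset_of_nonempty_equiv_inter {ι : Type*} {a c : X → ι}
    {D : Set X} (hac : ∀ x ∉ D, c x = a x)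
    (h : ∀ i, Nonempty (↥(D ∩ {x | a x = i}) ≃ ↥(D ∩ {x | c x = i}))) :
    ∃ Q : Equiv.Perm X, {x | Q x ≠ x} ⊆ D ∧ ∀ x, c (Q x) = a x := by
  classical
  let σ : Equiv.Perm D := Equiv.ofFiberEquiv (f := fun x => a x) (g := fun x => c x) fun i =>
    (Equiv.subtypeSubtypeEquivSubtypeInter (· ∈ D) (a · = i)).trans <| (h i).some.trans
      (Equiv.subtypeSubtypeEquivSubtypeInter (· ∈ D) (c · = i)).symm
  refine ⟨Equiv.Perm.ofSubtype σ, fun x hx => ?_, fun x => ?_⟩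
  · by_contra hxD
    exact hx (Equiv.Perm.ofSubtype_apply_of_not_mem σ hxD)
  · by_cases hx : x ∈ D
    · rw [Equiv.Perm.ofSubtype_apply_of_mem σ hx]
      exact Equiv.ofFiberEquiv_map (f := fun x : D => a x) (g := fun x : D => c x) _ ⟨x, hx⟩
    · rw [Equiv.Perm.ofSubtype_apply_of_not_mem σ hx, hac x hx]

end Captures

section Construction

variable {X ι : Type*} [MeasurableSpace X] [StandardBorelSpace X] [Countable ι] {a b : X → ι}

lemma exists_isBorelAuto_isAperiodic_shift {L₀ : X → ℤ}
    (ha : ∀ i, MeasurableSet {x | a x = i}) (hb : ∀ i, MeasurableSet {x | b x = i})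
    (hL₀ : Measurable L₀) {D : Set X} (hD : D.Countable) (hDinf : D.Infinite)
    (hfib : ∀ i k, Nonempty
      (↥(({x | a x = i} ∩ L₀ ⁻¹' {k}) \ D) ≃ ↥(({x | b x = i} ∩ L₀ ⁻¹' {k + 1}) \ D))) :
    ∃ S : Equiv.Perm X, IsBorelAuto S ∧ IsAperiodic S ∧ (∀ x, S x ∈ D ↔ x ∈ D) ∧
      ∀ x ∉ D, b (S x) = a x := by
  classical
  obtain ⟨L, hL, hLL₀, hLD⟩ :=
    exists_measurable_eqOn_compl_forall_inter_eq_singleton hD hDinf hL₀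
  let tag (c : X → ι) (x : X) : Option ι := if x ∈ D then none else some (c x)
  have fiber_none (c : X → ι) (k : ℤ) : {x | (tag c x, L x) = (none, k)} = D ∩ L ⁻¹' {k} := by
    ext x
    by_cases hx : x ∈ D <;> simp [tag, hx]
  have fiber_some (c : X → ι) (i : ι) (k : ℤ) :
      {x | (tag c x, L x) = (some i, k)} = ({x | c x = i} ∩ L₀ ⁻¹' {k}) \ D := by
    ext x
    by_cases hx : x ∈ D
    · simp [tag, hx]
    · simp [tag, hx, hLL₀ hx]
  have fiber_meas (c : X → ι) (hc : ∀ i, MeasurableSet {x | c x = i}) (j : Option ι × ℤ) :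
      MeasurableSet {x | (tag c x, L x) = j} := by
    obtain ⟨_ | i, k⟩ := j
    · rw [fiber_none]; exact (hD.mono inter_subset_left).measurableSet
    · rw [fiber_some]; exact ((hc i).inter (hL₀ (measurableSet_singleton k))).diff hD.measurableSet
  have shift (c : X → ι) (j : Option ι × ℤ) :
      {x | (tag c x, L x - 1) = j} = {x | (tag c x, L x) = (j.1, j.2 + 1)} := by
    ext x
    simp only [mem_ofPred_eq, Prod.ext_iff, sub_eq_iff_eq_add]
  obtain ⟨S, hS, hSπ⟩ := exists_isBorelAuto_comp_eq_of_equiv_fibers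
    (π := fun x => (tag a x, L x)) (π' := fun x => (tag b x, L x - 1))
    (fiber_meas a ha) (fun j => shift b j ▸ fiber_meas b hb _)
    (by
      rintro ⟨_ | i, k⟩
      · obtain ⟨p, hp⟩ := hLD k
        obtain ⟨q, hq⟩ := hLD (k + 1)
        exact ⟨(Equiv.setCongr ((fiber_none a k).trans hp)).trans ((Equiv.ofUnique _ _).trans
          (Equiv.setCongr (((shift b _).trans (fiber_none b (k + 1))).trans hq)).symm)⟩
      · exact (hfib i k).map fun e => (Equiv.setCongr (fiber_some a i k)).trans
          (e.trans (Equiv.setCongr ((shift b _).trans (fiber_some b i (k + 1)))).symm))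
  have hS_step x : tag b (S x) = tag a x ∧ L (S x) = L x + 1 := by
    obtain ⟨htag, hL⟩ := Prod.ext_iff.mp (hSπ x)
    exact ⟨htag, by simp only at hL; omega⟩
  refine ⟨S, hS, isAperiodic_of_map_add_one L fun x => (hS_step x).2, fun x => ?_, fun x hx => ?_⟩
  · have htag := (hS_step x).1
    by_cases hx : x ∈ D <;> by_cases hSxD : S x ∈ D <;> simp [tag, hx, hSxD] at htag ⊢
  · have htag := (hS_step x).1
    by_cases hSxD : S x ∈ D <;> simp [tag, hx, hSxD] at htag
    exact htag

lemma exists_countable_captures_levels [Uncountable X]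
    (ha : ∀ i, MeasurableSet {x | a x = i}) (hb : ∀ i, MeasurableSet {x | b x = i})
    (hab : ∀ i, Nonempty ({x // a x = i} ≃ {x // b x = i})) :
    ∃ (D : Set X) (L₀ : X → ℤ), D.Countable ∧ D.Infinite ∧ Measurable L₀ ∧
      (∀ i, Captures D {x | a x = i}) ∧ (∀ i, Captures D {x | b x = i}) ∧
      ∀ i k, Nonempty
        (↥(({x | a x = i} ∩ L₀ ⁻¹' {k}) \ D) ≃ ↥(({x | b x = i} ∩ L₀ ⁻¹' {k + 1}) \ D)) := by
  have hab_meas p : MeasurableSet {x | (a x, b x) = p} := by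
    simp only [Prod.ext_iff]
    exact (ha p.1).inter (hb p.2)
  obtain ⟨L₀, hL₀, hL₀unc⟩ := exists_measurable_int_forall_inter_not_countable hab_meas
  obtain ⟨D, hD, hDcap⟩ :=
    exists_countable_forall_captures (Sum.elim (fun i => {x | a x = i}) fun i => {x | b x = i})
  have hA i : Captures D {x | a x = i} := hDcap (.inl i)
  have hB i : Captures D {x | b x = i} := hDcap (.inr i)
  have hcount i : {x | a x = i}.Countable ↔ {x | b x = i}.Countable := by
    rw [← countable_coe_iff, ← countable_coe_iff]
    exact (hab i).some.countable_iff
  have hDinf : D.Infinite := by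
    obtain ⟨i, hi⟩ : ∃ i, ¬{x | a x = i}.Countable := by
      by_contra! h
      exact not_countable_univ ((countable_iUnion h).mono fun x _ => mem_iUnion.2 ⟨a x, rfl⟩)
    exact ((hA i).2 hi).mono inter_subset_left
  have hfib i k : Nonempty
      (↥(({x | a x = i} ∩ L₀ ⁻¹' {k}) \ D) ≃ ↥(({x | b x = i} ∩ L₀ ⁻¹' {k + 1}) \ D)) := by
    by_cases hi : {x | a x = i}.Countable
    · rw [sdiff_eq_empty.mpr (inter_subset_left.trans ((hA i).1 hi)),
        sdiff_eq_empty.mpr (inter_subset_left.trans ((hB i).1 ((hcount i).mp hi)))]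
      exact ⟨Equiv.refl _⟩
    · refine nonempty_equiv_of_not_countable
        (((ha i).inter (hL₀ (measurableSet_singleton _))).diff hD.measurableSet)
        (((hb i).inter (hL₀ (measurableSet_singleton _))).diff hD.measurableSet) ?_ ?_
      · exact fun h => hL₀unc {p | p.1 = i} hi k ((h.union hD).mono (subset_sdiff_union _ _))
      · exact fun h => hL₀unc {p | p.2 = i} (mt (hcount i).mpr hi) (k + 1)
          ((h.union hD).mono (subset_sdiff_union _ _))
  exact ⟨D, L₀, hD, hDinf, hL₀, hA, hB, hfib⟩

theorem exists_aperiodic_mul_countable_support_comp_eq [Uncountable X]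
    (ha : ∀ i, MeasurableSet {x | a x = i}) (hb : ∀ i, MeasurableSet {x | b x = i})
    (hab : ∀ i, Nonempty ({x // a x = i} ≃ {x // b x = i})) :
    ∃ S Q : Equiv.Perm X, IsBorelAuto S ∧ IsAperiodic S ∧ IsBorelAuto Q ∧
      {x | Q x ≠ x}.Countable ∧ ∀ x, b (S (Q x)) = a x := by
  obtain ⟨D, L₀, hD, hDinf, hL₀, hA, hB, hfib⟩ := exists_countable_captures_levels ha hb hab
  obtain ⟨S, hS, hSaper, hSD, hSab⟩ :=
    exists_isBorelAuto_isAperiodic_shift ha hb hL₀ hD hDinf hfib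
  have hSb i : Nonempty (↥(D ∩ {x | a x = i}) ≃ ↥(D ∩ {x | b (S x) = i})) :=
    ((hA i).nonempty_equiv_inter hD (hB i) (hab i)).map fun e =>
      e.trans (S.subtypeEquiv fun x => and_congr (hSD x).symm Iff.rfl).symm
  obtain ⟨Q, hQD, hQ⟩ := exists_perm_support_subset_of_nonempty_equiv_inter hSab hSb
  exact ⟨S, Q, hS, hSaper, isBorelAuto_of_countable_support (hD.mono hQD), hD.mono hQD, hQ⟩

end Construction

lemma Equiv.image_preimage_eq_of_comp {α β γ : Type*} (e : α ≃ β) {f : α → γ} {g : β → γ}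
    (h : ∀ x, g (e x) = f x) (U : Set γ) : e '' (f ⁻¹' U) = g ⁻¹' U := by
  ext y
  rw [e.image_eq_preimage_symm, mem_preimage, mem_preimage, mem_preimage, ← h, e.apply_symm_apply]

/-- aperiodic automorphisms are dense in `(Aut₀(X, 𝓑), p₀)`. -/
theorem aperiodic_dense_quotient_weak {X : Type*} [MeasurableSpace X]
    [StandardBorelSpace X] [Uncountable X]
    (T : Equiv.Perm X) (hT : IsBorelAuto T)
    (n : ℕ) (F : Fin n → Set X) (hF : ∀ i, MeasurableSet (F i)) :
    ∃ S Q : Equiv.Perm X, IsBorelAuto S ∧ IsAperiodic S ∧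
      IsBorelAuto Q ∧ {x : X | Q x ≠ x}.Countable ∧
      ∀ i, (⇑(S * Q)) '' F i = (⇑T) '' F i := by
  let a (x : X) : Fin n → Prop := fun i => x ∈ F i
  have ha : Measurable a := measurable_pi_lambda _ fun i => measurableSet_setOfPred.mp (hF i)
  obtain ⟨S, Q, hS, hSaper, hQ, hQc, hSQ⟩ := exists_aperiodic_mul_countable_support_comp_eq
    (b := a ∘ T.symm) (fun s => ha (measurableSet_singleton s))
    (fun s => (ha.comp hT.2) (measurableSet_singleton s))
    fun s => ⟨T.subtypeEquiv fun x => by simp⟩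
  refine ⟨S, Q, hS, hSaper, hQ, hQc, fun i => ?_⟩
  change (S * Q) '' (a ⁻¹' {s | s i}) = T '' (a ⁻¹' {s | s i})
  rw [Equiv.image_preimage_eq_of_comp _ hSQ,
    Equiv.image_preimage_eq_of_comp T (g := a ∘ T.symm) fun x => by simp]
end

section
/- Let T be a Borel automorphism of an uncountable standard Borel space (X, 𝓑). Then there exists a map f : [0,1] → Aut(X, 𝓑) with f(0) = id, f(1) = T, such that f(t) belongs to the full group [T] for every t ∈ [0,1], and for every non-atomic Borel probability measure μ on X and every t₀ ∈ [0,1], μ(E(f(t), f(t₀))) → 0 as t → t₀. (The full group of any Borel automorphism is path-connected in the quotient uniform topology τ₀.) -/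
open MeasureTheory Set
open scoped ENNReal

/-- The set on which `S` and `T` (or their inverses) differ. -/
def Eset {X : Type*} (S T : Equiv.Perm X) : Set X :=
  {x | S x ≠ T x} ∪ {x | S⁻¹ x ≠ T⁻¹ x}

/-!
The induced map of `T` on a set `C` to which every point of `C` returns, in both time directions,
is a Borel automorphism; composing its inverse with `T` cycles every orbit segment that runs from
a point of `C` to just before the next one. For `C = X` this is the identity, for `C = ∅` it is
`T`. The path runs through these maps for the superlevel sets `{t < ℓ}` of a Borel function
`ℓ : X → (0, 1]` with countable fibres. The value at `x` of such a map, or of its inverse, only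
depends on which of finitely many points of the orbit of `x` lie in the set, so it is locally
constant in `t` near `t₀` unless `ℓ` takes the value `t₀` on the orbit of `x`. That happens on a
countable set, which is null for a non-atomic measure, and dominated convergence gives continuity.

For the superlevel sets to be recurrent, `ℓ` is built from an injective Borel `g : X → (0, 1)`.
On a periodic orbit every set is recurrent. On an aperiodic orbit `g` takes infinitely many
distinct values close to its upper limit along the forward orbit, and likewise backwards; `ℓ x`
is close to `1` when `g x` is close to one of these two limits, and it encodes `g x` together with
the dyadic scale of that distance, which keeps it injective.
-/

open Filter Function Topology
open Equiv (Perm)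

namespace IsBorelAuto

variable {X : Type*} [MeasurableSpace X] {S T : Perm X}

lemma mul (hS : IsBorelAuto S) (hT : IsBorelAuto T) : IsBorelAuto (S * T) :=
  ⟨hS.1.comp hT.1, hT.2.comp hS.2⟩

lemma inv (hT : IsBorelAuto T) : IsBorelAuto T⁻¹ := ⟨hT.2, hT.1⟩

lemma pow (hT : IsBorelAuto T) (n : ℕ) : IsBorelAuto (T ^ n) := by
  induction n with
  | zero => exact ⟨measurable_id, measurable_id⟩
  | succ n ih => rw [pow_succ]; exact ih.mul hT

lemma measurableSet_Eset [MeasurableEq X] (hS : IsBorelAuto S) (hT : IsBorelAuto T) :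
    MeasurableSet (Eset S T) :=
  (measurableSet_eq_fun hS.1 hT.1).compl.union (measurableSet_eq_fun hS.2 hT.2).compl

end IsBorelAuto

section FirstReturn

variable {X : Type*} {T : Perm X} {C D : Set X} {x : X}

variable (T C) in
def ReturnsTo : Prop := ∀ x ∈ C, ∃ n : ℕ, (T ^ (n + 1)) x ∈ C

lemma ReturnsTo.exists_pow (hC : ReturnsTo T C) (x : X) :
    ∃ n : ℕ, x ∈ C → (T ^ (n + 1)) x ∈ C := by
  by_cases hx : x ∈ C
  · obtain ⟨n, hn⟩ := hC x hx
    exact ⟨n, fun _ => hn⟩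
  · exact ⟨0, fun h => absurd h hx⟩

open scoped Classical in
noncomputable def returnTime (hC : ReturnsTo T C) (x : X) : ℕ :=
  if x ∈ C then Nat.find (hC.exists_pow x) + 1 else 0

noncomputable def firstReturn (hC : ReturnsTo T C) (x : X) : X := (T ^ returnTime hC x) x

lemma returnTime_of_notMem (hC : ReturnsTo T C) (hx : x ∉ C) : returnTime hC x = 0 :=
  if_neg hx

lemma exists_returnTime_eq_succ (hC : ReturnsTo T C) (hx : x ∈ C) :
    ∃ n, returnTime hC x = n + 1 :=
  ⟨_, if_pos hx⟩

lemma returnTime_eq_succ_iff (hC : ReturnsTo T C) (hx : x ∈ C) {n : ℕ} :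
    returnTime hC x = n + 1 ↔ (T ^ (n + 1)) x ∈ C ∧ ∀ k < n, (T ^ (k + 1)) x ∉ C := by
  classical
  rw [returnTime, if_pos hx, Nat.add_right_cancel_iff, Nat.find_eq_iff]
  simp [hx]

lemma firstReturn_of_notMem (hC : ReturnsTo T C) (hx : x ∉ C) : firstReturn hC x = x := by
  simp [firstReturn, returnTime_of_notMem hC hx]

lemma firstReturn_of_mem_of_apply_mem (hC : ReturnsTo T C) (hx : x ∈ C) (hTx : T x ∈ C) :
    firstReturn hC x = T x := by
  rw [firstReturn, (returnTime_eq_succ_iff hC hx (n := 0)).2 ⟨by simpa, by simp⟩, zero_add,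
    pow_one]

lemma firstReturn_inv_firstReturn (hC : ReturnsTo T C) (hC' : ReturnsTo T⁻¹ C) (x : X) :
    firstReturn hC' (firstReturn hC x) = x := by
  by_cases hx : x ∈ C
  swap
  · rw [firstReturn_of_notMem hC hx, firstReturn_of_notMem hC' hx]
  obtain ⟨n, hn⟩ := exists_returnTime_eq_succ hC hx
  obtain ⟨hmem, hmin⟩ := (returnTime_eq_succ_iff hC hx).1 hn
  have back : ∀ k ≤ n, (T⁻¹ ^ (k + 1)) ((T ^ (n + 1)) x) = (T ^ (n - k)) x := by
    intro k hk
    obtain ⟨j, rfl⟩ := Nat.exists_eq_add_of_le hk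
    rw [← Perm.mul_apply, inv_pow, show k + j + 1 = k + 1 + j by omega, pow_add T (k + 1) j,
      inv_mul_cancel_left, Nat.add_sub_cancel_left]
  have hn' : returnTime hC' ((T ^ (n + 1)) x) = n + 1 := by
    refine (returnTime_eq_succ_iff hC' hmem).2 ⟨by simpa [back n le_rfl], fun k hk => ?_⟩
    rw [back k hk.le, show n - k = n - k - 1 + 1 by omega]
    exact hmin _ (by omega)
  have hy : firstReturn hC x = (T ^ (n + 1)) x := by rw [firstReturn, hn]
  rw [hy, firstReturn, hn', back n le_rfl, Nat.sub_self, pow_zero, Perm.one_apply]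

noncomputable def inducedPerm (hC : ReturnsTo T C) (hC' : ReturnsTo T⁻¹ C) : Perm X where
  toFun := firstReturn hC
  invFun := firstReturn hC'
  left_inv := firstReturn_inv_firstReturn hC hC'
  right_inv := firstReturn_inv_firstReturn (T := T⁻¹) hC' hC

lemma returnTime_congr (hC : ReturnsTo T C) (hD : ReturnsTo T D) (x : X)
    (h : ∀ k ≤ returnTime hC x, ((T ^ k) x ∈ C ↔ (T ^ k) x ∈ D)) :
    returnTime hD x = returnTime hC x := by
  have h₀ : x ∈ C ↔ x ∈ D := by simpa using h 0 (Nat.zero_le _)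
  by_cases hx : x ∈ C
  · obtain ⟨n, hn⟩ := exists_returnTime_eq_succ hC hx
    obtain ⟨hmem, hmin⟩ := (returnTime_eq_succ_iff hC hx).1 hn
    rw [hn] at h ⊢
    exact (returnTime_eq_succ_iff hD (h₀.1 hx)).2
      ⟨(h _ le_rfl).1 hmem, fun k hk hkD => hmin k hk ((h _ (by omega)).2 hkD)⟩
  · rw [returnTime_of_notMem hC hx, returnTime_of_notMem hD (mt h₀.2 hx)]

variable [MeasurableSpace X]

lemma measurable_returnTime (hT : IsBorelAuto T) (hCm : MeasurableSet C) (hC : ReturnsTo T C) :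
    Measurable (returnTime hC) := by
  classical
  refine Measurable.ite hCm ?_ measurable_const
  refine (measurable_of_countable (· + 1)).comp (measurable_find hC.exists_pow fun n => ?_)
  have h : {x | x ∈ C → (T ^ (n + 1)) x ∈ C} = Cᶜ ∪ ⇑(T ^ (n + 1)) ⁻¹' C := by
    ext; simp [imp_iff_not_or]
  exact h ▸ hCm.compl.union ((hT.pow _).1 hCm)

lemma measurable_firstReturn (hT : IsBorelAuto T) (hCm : MeasurableSet C) (hC : ReturnsTo T C) :
    Measurable (firstReturn hC) :=
  (measurable_from_prod_countable_left fun n => (hT.pow n).1 :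
    Measurable fun p : X × ℕ => (T ^ p.2) p.1).comp
      (measurable_id.prodMk (measurable_returnTime hT hCm hC))

lemma isBorelAuto_inducedPerm (hT : IsBorelAuto T) (hCm : MeasurableSet C) (hC : ReturnsTo T C)
    (hC' : ReturnsTo T⁻¹ C) : IsBorelAuto (inducedPerm hC hC') :=
  ⟨measurable_firstReturn hT hCm hC, measurable_firstReturn hT.inv hCm hC'⟩

end FirstReturn

lemma Equiv.Perm.inv_pow_apply_self_apply {X : Type*} (T : Perm X) (k : ℕ) (x : X) :
    (T⁻¹ ^ k) (T x) = (T ^ (1 - k : ℤ)) x := by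
  rw [← Perm.mul_apply]
  exact DFunLike.congr_fun (by group) x

lemma eventually_lt_iff_lt_of_ne {α : Type*} [LinearOrder α] [TopologicalSpace α]
    [OrderTopology α] {a t₀ : α} (h : a ≠ t₀) : ∀ᶠ t in 𝓝 t₀, (t < a ↔ t₀ < a) := by
  rcases h.lt_or_gt with h | h
  · filter_upwards [eventually_gt_nhds h] with t ht
    exact iff_of_false (not_lt.2 ht.le) (not_lt.2 h.le)
  · filter_upwards [eventually_lt_nhds h] with t ht using iff_of_true ht h

lemma eventually_returnTime_eq {X : Type*} {S : Perm X} {ℓ : X → ℝ}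
    (hS : ∀ t, ReturnsTo S {x | t < ℓ x}) {t₀ : ℝ} {x : X} (hx : ∀ k : ℕ, ℓ ((S ^ k) x) ≠ t₀) :
    ∀ᶠ t in 𝓝 t₀, returnTime (hS t) x = returnTime (hS t₀) x := by
  have h := (eventually_all_finset (Finset.range (returnTime (hS t₀) x + 1))).2
    fun k _ => eventually_lt_iff_lt_of_ne (hx k)
  filter_upwards [h] with t ht
  exact returnTime_congr _ _ _ fun k hk => (ht k (Finset.mem_range_succ_iff.2 hk)).symm

section SwitchingPath

variable {X : Type*} [MeasurableSpace X] {T : Perm X} {ℓ : X → ℝ}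

structure IsSwitchingTime (T : Perm X) (ℓ : X → ℝ) : Prop where
  measurable : Measurable ℓ
  pos : ∀ x, 0 < ℓ x
  le_one : ∀ x, ℓ x ≤ 1
  countable_fiber : ∀ v, {x | ℓ x = v}.Countable
  returnsTo : ∀ t, ReturnsTo T {x | t < ℓ x}
  returnsTo_inv : ∀ t, ReturnsTo T⁻¹ {x | t < ℓ x}

noncomputable def switchingPath (hℓ : IsSwitchingTime T ℓ) (t : ℝ) : Perm X :=
  (inducedPerm (hℓ.returnsTo t) (hℓ.returnsTo_inv t))⁻¹ * T

variable (hℓ : IsSwitchingTime T ℓ)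

lemma switchingPath_apply (t : ℝ) (x : X) :
    switchingPath hℓ t x = firstReturn (hℓ.returnsTo_inv t) (T x) := rfl

lemma switchingPath_inv_apply (t : ℝ) (x : X) :
    (switchingPath hℓ t)⁻¹ x = T⁻¹ (firstReturn (hℓ.returnsTo t) x) := rfl

lemma isBorelAuto_switchingPath (hT : IsBorelAuto T) (t : ℝ) :
    IsBorelAuto (switchingPath hℓ t) :=
  (isBorelAuto_inducedPerm hT (measurableSet_lt measurable_const hℓ.measurable) _ _).inv.mul hT

lemma switchingPath_zero : switchingPath hℓ 0 = 1 := by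
  ext x
  rw [switchingPath_apply, firstReturn_of_mem_of_apply_mem (hℓ.returnsTo_inv 0) (x := T x)
    (hℓ.pos _) (by simpa using hℓ.pos x)]
  simp

lemma switchingPath_one : switchingPath hℓ 1 = T := by
  ext x
  rw [switchingPath_apply, firstReturn_of_notMem (hℓ.returnsTo_inv 1) (x := T x)
    (hℓ.le_one _).not_gt]

lemma exists_switchingPath_apply_eq_zpow (t : ℝ) (x : X) :
    ∃ n : ℤ, switchingPath hℓ t x = (T ^ n) x :=
  ⟨_, Perm.inv_pow_apply_self_apply T _ x⟩

theorem tendsto_measure_Eset_switchingPath [MeasurableEq X] (hT : IsBorelAuto T)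
    (μ : Measure X) [IsFiniteMeasure μ] [NullSingletonClass μ] (t₀ : ℝ) :
    Tendsto (fun t => μ (Eset (switchingPath hℓ t) (switchingPath hℓ t₀))) (𝓝 t₀) (𝓝 0) := by
  have hN : (⋃ n : ℤ, ⇑(T ^ n) ⁻¹' {x | ℓ x = t₀}).Countable :=
    countable_iUnion fun n => (hℓ.countable_fiber t₀).preimage (T ^ n).injective
  have h_lim : ∀ᵐ x ∂μ, ∀ᶠ t in 𝓝 t₀,
      x ∈ Eset (switchingPath hℓ t) (switchingPath hℓ t₀) ↔ x ∈ (∅ : Set X) := by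
    filter_upwards [measure_eq_zero_iff_ae_notMem.1 (hN.measure_zero μ)] with x hx
    simp only [mem_iUnion, mem_preimage, not_exists] at hx
    filter_upwards [eventually_returnTime_eq hℓ.returnsTo_inv (x := T x)
        fun k => by rw [Perm.inv_pow_apply_self_apply]; exact hx _,
      eventually_returnTime_eq hℓ.returnsTo (x := x) fun k => by rw [← zpow_natCast]; exact hx _]
      with t h₁ h₂
    simp [Eset, switchingPath_apply, switchingPath_inv_apply, firstReturn, h₁, h₂]
  simpa using tendsto_measure_of_ae_tendsto_indicator_of_isFiniteMeasure (𝓝 t₀)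
    MeasurableSet.empty (fun t => (isBorelAuto_switchingPath hℓ hT t).measurableSet_Eset
      (isBorelAuto_switchingPath hℓ hT t₀)) h_lim

end SwitchingPath

lemma frequently_abs_sub_limsup_lt {ι : Type*} {l : Filter ι} [l.NeBot] {u : ι → ℝ} {a b : ℝ}
    (hu : ∀ i, u i ∈ Icc a b) {ε : ℝ} (hε : 0 < ε) :
    ∃ᶠ i in l, |u i - limsup u l| < ε := by
  have h₁ : ∃ᶠ i in l, limsup u l - ε < u i :=
    frequently_lt_of_lt_limsup (isCoboundedUnder_le_of_le l fun i => (hu i).1) (by linarith)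
  have h₂ : ∀ᶠ i in l, u i < limsup u l + ε :=
    eventually_lt_of_limsup_lt (by linarith) (isBoundedUnder_of ⟨b, fun i => (hu i).2⟩)
  exact (h₁.and_eventually h₂).mono fun i hi =>
    abs_sub_lt_iff.2 ⟨by linarith [hi.2], by linarith [hi.1]⟩

lemma eq_of_div_two_pow_eq {a b : ℝ} {m n : ℕ} (ha : a ∈ Ioc (1 / 2) 1) (hb : b ∈ Ioc (1 / 2) 1)
    (h : a / 2 ^ m = b / 2 ^ n) : m = n := by
  wlog hmn : m < n generalizing a b m n
  · rcases (not_lt.1 hmn).lt_or_eq with hlt | rfl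
    · exact (this hb ha h.symm hlt).symm
    · rfl
  have h2 : 2 * (2:ℝ) ^ m ≤ 2 ^ n := by
    rw [← pow_succ']; exact pow_le_pow_right₀ (by norm_num) hmn
  rw [div_eq_div_iff (by positivity) (by positivity)] at h
  nlinarith [ha.1, hb.2, pow_pos (two_pos : (0:ℝ) < 2) m]

lemma Equiv.Perm.exists_pow_succ_apply_eq_self {X : Type*} {S : Perm X} {x : X} {a b : ℕ}
    (h : (S ^ a) x = (S ^ b) x) (hab : a ≠ b) : ∃ n, (S ^ (n + 1)) x = x := by
  wlog hlt : a < b generalizing a b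
  · exact this h.symm hab.symm (by omega)
  refine ⟨b - a - 1, (S ^ a).injective ?_⟩
  rw [← Perm.mul_apply, ← pow_add, h]
  congr 2
  omega

section LimsupSwitchingTime

variable {X : Type*} (S : Perm X) (g : X → ℝ)

noncomputable def orbitLimsup (x : X) : ℝ := limsup (fun n : ℕ => g ((S ^ n) x)) atTop

noncomputable def limsupGap (x : X) : ℝ :=
  min |g x - orbitLimsup S g x| |g x - orbitLimsup S⁻¹ g x|

noncomputable def limsupSwitchingTime (x : X) : ℝ :=
  1 - (1 - g x / 2) / 2 ^ ⌊(limsupGap S g x)⁻¹⌋₊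

lemma orbitLimsup_pow_apply (n : ℕ) (x : X) :
    orbitLimsup S g ((S ^ n) x) = orbitLimsup S g x := by
  simp_rw [orbitLimsup, ← Perm.mul_apply, ← pow_add]
  exact limsup_nat_add (fun k => g ((S ^ k) x)) n

lemma orbitLimsup_inv_pow_apply (n : ℕ) (x : X) :
    orbitLimsup S⁻¹ g ((S ^ n) x) = orbitLimsup S⁻¹ g x := by
  rw [orbitLimsup, ← limsup_nat_add _ n]
  simp_rw [← Perm.mul_apply, pow_add, mul_assoc, inv_pow, inv_mul_cancel, mul_one]
  rfl

lemma limsupSwitchingTime_inv : limsupSwitchingTime S⁻¹ g = limsupSwitchingTime S g := by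
  ext x
  simp [limsupSwitchingTime, limsupGap, min_comm]

variable {S g}

lemma limsupSwitchingTime_pos (hg_mem : ∀ x, g x ∈ Ioo 0 1) (x : X) :
    0 < limsupSwitchingTime S g x := by
  have := (hg_mem x).1
  have : 1 ≤ (2:ℝ) ^ ⌊(limsupGap S g x)⁻¹⌋₊ := one_le_pow₀ (by norm_num)
  rw [limsupSwitchingTime, sub_pos, div_lt_one (by positivity)]
  linarith

lemma limsupSwitchingTime_lt_one (hg_mem : ∀ x, g x ∈ Ioo 0 1) (x : X) :
    limsupSwitchingTime S g x < 1 := by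
  have := (hg_mem x).2
  rw [limsupSwitchingTime, sub_lt_self_iff]
  exact div_pos (by linarith) (by positivity)

lemma limsupSwitchingTime_injective (hg_mem : ∀ x, g x ∈ Ioo 0 1) (hg_inj : Injective g) :
    Injective (limsupSwitchingTime S g) := by
  intro x y h
  have hmem : ∀ z, 1 - g z / 2 ∈ Ioc (1 / 2) 1 := fun z => by
    constructor <;> linarith [(hg_mem z).1, (hg_mem z).2]
  rw [limsupSwitchingTime, limsupSwitchingTime, sub_right_inj] at h
  have hexp := eq_of_div_two_pow_eq (hmem x) (hmem y) h
  rw [hexp, div_left_inj' (by positivity)] at h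
  exact hg_inj (by linarith)

lemma lt_limsupSwitchingTime {t : ℝ} {M : ℕ} (hM : (1 / 2 : ℝ) ^ M < 1 - t)
    (hg_mem : ∀ x, g x ∈ Ioo 0 1) {x : X} (hgap : (M : ℝ) ≤ (limsupGap S g x)⁻¹) :
    t < limsupSwitchingTime S g x := by
  have hm : M ≤ ⌊(limsupGap S g x)⁻¹⌋₊ := Nat.le_floor hgap
  have : (1 - g x / 2) / 2 ^ ⌊(limsupGap S g x)⁻¹⌋₊ ≤ (1 / 2) ^ M := by
    rw [one_div_pow]
    calc (1 - g x / 2) / 2 ^ ⌊(limsupGap S g x)⁻¹⌋₊ ≤ 1 / 2 ^ ⌊(limsupGap S g x)⁻¹⌋₊ := by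
          gcongr; linarith [(hg_mem x).1]
      _ ≤ 1 / 2 ^ M := by gcongr; norm_num
  rw [limsupSwitchingTime]
  linarith

lemma frequently_lt_limsupSwitchingTime (hg_mem : ∀ x, g x ∈ Ioo 0 1) (hg_inj : Injective g)
    {x : X} (hx : Injective fun n : ℕ => (S ^ n) x) {t : ℝ} (ht : t < 1) :
    ∃ᶠ n in atTop, t < limsupSwitchingTime S g ((S ^ n) x) := by
  obtain ⟨M, hM⟩ := exists_pow_lt_of_lt_one (sub_pos.2 ht) (by norm_num : (1 / 2 : ℝ) < 1)
  have hclose := frequently_abs_sub_limsup_lt (l := atTop) (u := fun n => g ((S ^ n) x))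
    (fun n => ⟨(hg_mem _).1.le, (hg_mem _).2.le⟩) (inv_pos.2 (Nat.cast_add_one_pos M))
  have hne : ∀ v, ∀ᶠ n in atTop, g ((S ^ n) x) ≠ v := fun v => by
    have : {n | g ((S ^ n) x) = v}.Finite :=
      Set.Subsingleton.finite fun a ha b hb => (hg_inj.comp hx) (ha.trans hb.symm)
    simpa [Nat.cofinite_eq_atTop] using this.eventually_cofinite_notMem
  refine (hclose.and_eventually ((hne (orbitLimsup S g x)).and (hne (orbitLimsup S⁻¹ g x)))).mono
    fun n ⟨hn, hn₁, hn₂⟩ => lt_limsupSwitchingTime hM hg_mem ?_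
  have hgap : limsupGap S g ((S ^ n) x) =
      min |g ((S ^ n) x) - orbitLimsup S g x| |g ((S ^ n) x) - orbitLimsup S⁻¹ g x| := by
    rw [limsupGap, orbitLimsup_pow_apply, orbitLimsup_inv_pow_apply]
  have hpos : 0 < limsupGap S g ((S ^ n) x) := by
    rw [hgap]; exact lt_min (abs_pos.2 (sub_ne_zero.2 hn₁)) (abs_pos.2 (sub_ne_zero.2 hn₂))
  have hlt : limsupGap S g ((S ^ n) x) < ((M : ℝ) + 1)⁻¹ := by
    rw [hgap]; exact (min_le_left _ _).trans_lt hn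
  have := (lt_inv_comm₀ hpos (Nat.cast_add_one_pos M)).1 hlt
  linarith

lemma returnsTo_limsupSwitchingTime (hg_mem : ∀ x, g x ∈ Ioo 0 1) (hg_inj : Injective g)
    (t : ℝ) : ReturnsTo S {x | t < limsupSwitchingTime S g x} := by
  intro x hx
  by_cases hinj : Injective fun n : ℕ => (S ^ n) x
  · obtain ⟨n, hn, h⟩ := frequently_atTop.1 (frequently_lt_limsupSwitchingTime hg_mem hg_inj
      hinj (hx.trans (limsupSwitchingTime_lt_one hg_mem x))) 1
    exact ⟨n - 1, by rwa [Nat.sub_add_cancel hn]⟩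
  · obtain ⟨a, b, hab, hne⟩ := not_injective_iff.1 hinj
    obtain ⟨n, hn⟩ := Perm.exists_pow_succ_apply_eq_self hab hne
    exact ⟨n, by simpa only [mem_ofPred_eq, hn] using hx⟩

lemma measurable_limsupSwitchingTime [MeasurableSpace X] (hS : IsBorelAuto S)
    (hg_meas : Measurable g) : Measurable (limsupSwitchingTime S g) := by
  have hL : ∀ S : Perm X, IsBorelAuto S → Measurable (orbitLimsup S g) := fun S hS =>
    Measurable.limsup fun n => hg_meas.comp (hS.pow n).1
  have hgap : Measurable (limsupGap S g) :=
    ((hg_meas.sub (hL S hS)).abs).min ((hg_meas.sub (hL _ hS.inv)).abs)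
  exact measurable_const.sub ((measurable_const.sub (hg_meas.div_const 2)).div
    ((measurable_of_countable fun n : ℕ => (2:ℝ) ^ n).comp hgap.inv.nat_floor))

theorem isSwitchingTime_limsupSwitchingTime [MeasurableSpace X] (hS : IsBorelAuto S)
    (hg_meas : Measurable g) (hg_mem : ∀ x, g x ∈ Ioo 0 1) (hg_inj : Injective g) :
    IsSwitchingTime S (limsupSwitchingTime S g) where
  measurable := measurable_limsupSwitchingTime hS hg_meas
  pos := limsupSwitchingTime_pos hg_mem
  le_one x := (limsupSwitchingTime_lt_one hg_mem x).le
  countable_fiber _ := Set.Subsingleton.countable fun _ hx _ hy =>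
    limsupSwitchingTime_injective hg_mem hg_inj (hx.trans hy.symm)
  returnsTo := returnsTo_limsupSwitchingTime hg_mem hg_inj
  returnsTo_inv := limsupSwitchingTime_inv S g ▸ returnsTo_limsupSwitchingTime hg_mem hg_inj

end LimsupSwitchingTime

/-- the full group of any Borel automorphism is path-connected
in the quotient uniform topology `τ₀`. -/
theorem full_group_path_connected {X : Type*} [MeasurableSpace X]
    [StandardBorelSpace X]
    (T : Equiv.Perm X) (hT : IsBorelAuto T) :
    ∃ f : Set.Icc (0 : ℝ) 1 → Equiv.Perm X,
      (∀ t, IsBorelAuto (f t)) ∧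
      f ⟨0, by norm_num⟩ = 1 ∧ f ⟨1, by norm_num⟩ = T ∧
      (∀ t (x : X), ∃ n : ℤ, f t x = (T ^ n) x) ∧
      ∀ (μ : Measure X), IsProbabilityMeasure μ → (∀ x : X, μ {x} = 0) →
        ∀ t₀ : Set.Icc (0 : ℝ) 1,
          Filter.Tendsto (fun t => μ (Eset (f t) (f t₀))) (nhds t₀) (nhds 0) := by
  obtain ⟨e, he⟩ := exists_measurableEmbedding_real X
  have hℓ := isSwitchingTime_limsupSwitchingTime hT (continuous_sigmoid.measurable.comp
    he.measurable) (fun x => ⟨Real.sigmoid_pos _, Real.sigmoid_lt_one _⟩)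
    (Real.sigmoid_injective.comp he.injective)
  refine ⟨fun t => switchingPath hℓ t, fun t => isBorelAuto_switchingPath hℓ hT t,
    switchingPath_zero hℓ, switchingPath_one hℓ,
    fun t => exists_switchingPath_apply_eq_zpow hℓ t, fun μ _ hμ t₀ => ?_⟩
  have : NullSingletonClass μ := ⟨hμ⟩
  exact (tendsto_measure_Eset_switchingPath hℓ hT μ t₀).comp continuous_subtype_val.continuousAt
end
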